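/- Let v, κ be positive reals with v > 100/κ, let r ≥ 100v/κ be a positive integer, and consider the vector η = (1/r, v/r) ∈ ℝ². Then for every z ∈ ℝ², the set {z + kη mod ℤ² : k = 0, 1, ..., r·⌈v⌉} is κ-dense in T², i.e., every point of T² is within distance κ of some point of this set. -/

import Mathlib

/-- The 2-torus `ℝ²/ℤ²`. -/
abbrev Torus2 := AddCircle (1 : ℝ) × AddCircle (1 : ℝ)

/-!
Write `η = (1/r, v/r)`. A greedy choice in each coordinate does the job: first take `i ≤ r`
steps so that the first coordinate lands within `1/r` of its target; then take `j` further
steps, each moving the second coordinate by `v/r ≤ κ/100`, until it too is within `v/r` of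
its target. About `r/v` steps suffice for that, and they shift the first coordinate by only
about `1/v < κ/100`. If `κ ≥ 1/2` there is nothing to prove, since `T²` has diameter `1/2`;
otherwise `v > 200`, which keeps the `i + j < r + r/v + 2` steps within `r⌈v⌉`.
-/

namespace AddCircle

theorem norm_coe_le_abs (p x : ℝ) : ‖(x : AddCircle p)‖ ≤ |x| :=
  QuotientAddGroup.norm_mk_le_norm

theorem exists_nsmul_eq_add {s : ℝ} (hs : 0 < s) (t : AddCircle (1 : ℝ)) :
    ∃ j : ℕ, (j : ℝ) * s < 1 + s ∧ ∃ e : ℝ, 0 ≤ e ∧ e < s ∧ j • (s : AddCircle (1 : ℝ)) = t + e := by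
  induction t using QuotientAddGroup.induction_on with | H y => ?_
  rw [← coe_fract y]
  set x := Int.fract y
  have hx₀ : 0 ≤ x := Int.fract_nonneg y
  have hx₁ : x < 1 := Int.fract_lt_one y
  set j := ⌈x / s⌉₊
  have hle : x ≤ j * s := (div_le_iff₀ hs).1 (Nat.le_ceil _)
  have hlt : j * s < x + s := by
    have := (Nat.ceil_lt_add_one (div_nonneg hx₀ hs.le) : (j : ℝ) < x / s + 1)
    rwa [← lt_div_iff₀ hs, add_div, div_self hs.ne']
  refine ⟨j, by linarith, j * s - x, by linarith, by linarith, ?_⟩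
  rw [← coe_nsmul, nsmul_eq_mul, ← coe_add, add_sub_cancel]

end AddCircle

open AddCircle in
theorem Torus2.exists_nsmul_dist_le {α β κ : ℝ} (hα : 0 < α) (hβ : 0 < β)
    (h₁ : 2 * α + α / β ≤ κ) (h₂ : β ≤ κ) (z w : Torus2) :
    ∃ k : ℕ, (k : ℝ) < 1 / α + 1 / β + 2 ∧
      dist w (z + k • ((α : AddCircle (1 : ℝ)), (β : AddCircle (1 : ℝ)))) ≤ κ := by
  obtain ⟨i, hi, e₁, he₁, he₁', hi_eq⟩ := exists_nsmul_eq_add hα (w.1 - z.1)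
  obtain ⟨j, hj, e₂, he₂, he₂', hj_eq⟩ :=
    exists_nsmul_eq_add hβ (w.2 - z.2 - i • (β : AddCircle (1 : ℝ)))
  have hi' : (i : ℝ) < 1 / α + 1 := by rwa [div_add_one hα.ne', lt_div_iff₀ hα]
  have hj' : (j : ℝ) < 1 / β + 1 := by rwa [div_add_one hβ.ne', lt_div_iff₀ hβ]
  refine ⟨i + j, by push_cast; linarith, ?_⟩
  have hjα : j * α < α / β + α := by
    have := mul_lt_mul_of_pos_right hj' hα
    rwa [add_mul, one_mul, one_div_mul_eq_div] at this
  have hfst : w.1 - (z.1 + (i + j) • (α : AddCircle (1 : ℝ))) = -↑(e₁ + j * α) := by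
    rw [add_nsmul, hi_eq, coe_add, ← nsmul_eq_mul, coe_nsmul]; abel
  have hsnd : w.2 - (z.2 + (i + j) • (β : AddCircle (1 : ℝ))) = -↑e₂ := by
    rw [add_nsmul, hj_eq]; abel
  rw [Prod.dist_eq, dist_eq_norm, dist_eq_norm]
  simp only [Prod.fst_add, Prod.snd_add, Prod.smul_fst, Prod.smul_snd]
  rw [hfst, hsnd, norm_neg, norm_neg]
  refine max_le ((norm_coe_le_abs _ _).trans ?_) ((norm_coe_le_abs _ _).trans ?_)
  · rw [abs_of_nonneg (by positivity)]; linarith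
  · rw [abs_of_nonneg he₂]; linarith

theorem Torus2.dist_le_half (p q : Torus2) : dist p q ≤ 1 / 2 := by
  rw [Prod.dist_eq, dist_eq_norm, dist_eq_norm]
  have h := fun x : AddCircle (1 : ℝ) => AddCircle.norm_le_half_period (1 : ℝ) (x := x) one_ne_zero
  rw [abs_one] at h
  exact max_le (h _) (h _)

theorem rational_translation_orbit_kappa_dense_general (v κ : ℝ)
    (hκ : 0 < κ) (hvκ : v > 100 / κ) (r : ℕ) (hr : 100 * v / κ ≤ (r : ℝ)) :
    ∀ z w : Torus2, ∃ k : ℕ, k ≤ r * ⌈v⌉₊ ∧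
      dist w (z + k • ((((1 : ℝ) / r : ℝ) : AddCircle (1 : ℝ)),
        ((v / r : ℝ) : AddCircle (1 : ℝ)))) ≤ κ := by
  intro z w
  rcases le_or_gt (1 / 2) κ with hκ_half | hκ_half
  · exact ⟨0, Nat.zero_le _, (Torus2.dist_le_half _ _).trans hκ_half⟩
  have hvκ' : 100 < v * κ := by rwa [gt_iff_lt, div_lt_iff₀ hκ] at hvκ
  have hv : 200 < v := by nlinarith
  have hrκ : 100 * v ≤ r * κ := by rwa [div_le_iff₀ hκ] at hr
  have hr₀ : 0 < (r : ℝ) := by nlinarith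
  have h₁ : 2 * (1 / r) + 1 / r / (v / r) ≤ κ := by
    have : 1 / (r : ℝ) ≤ κ / 4 := by rw [div_le_iff₀ hr₀]; linarith
    have : 1 / v ≤ κ / 2 := by rw [div_le_iff₀ (by linarith)]; linarith
    rw [div_div_div_cancel_right₀ hr₀.ne']; linarith
  have h₂ : v / r ≤ κ := by rw [div_le_iff₀ hr₀]; nlinarith
  obtain ⟨k, hk, hdist⟩ := Torus2.exists_nsmul_dist_le (by positivity) (by positivity) h₁ h₂ z w
  refine ⟨k, ?_, hdist⟩
  rw [one_div_one_div, one_div_div] at hk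
  have hr₁ : (1 : ℝ) ≤ r := Nat.one_le_cast.2 (Nat.cast_pos.1 hr₀)
  have hrv : r / v ≤ r := div_le_self hr₀.le (by linarith)
  have hceil : v ≤ ⌈v⌉₊ := Nat.le_ceil v
  have : (k : ℝ) < r * ⌈v⌉₊ + 1 := by nlinarith
  exact Nat.lt_add_one_iff.1 (by exact_mod_cast this)

theorem rational_translation_orbit_kappa_dense (v κ : ℝ) (hv : 0 < v)
    (hκ : 0 < κ) (hvκ : v > 100 / κ) (r : ℕ) (hr : 100 * v / κ ≤ (r : ℝ)) :
    ∀ z w : Torus2, ∃ k : ℕ, k ≤ r * ⌈v⌉₊ ∧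
      dist w (z + k • ((((1 : ℝ) / r : ℝ) : AddCircle (1 : ℝ)),
        ((v / r : ℝ) : AddCircle (1 : ℝ)))) ≤ κ :=
  rational_translation_orbit_kappa_dense_general v κ hκ hvκ r hr
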